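/- For integers 0 < m < n with t_k = kπ/(n+1) (k = 1,…,n), and for every t ∈ [0,π] and every k, the quantity Ψ(t,t_k) = sin(m(t−t_k))/sin²((t−t_k)/2) − sin(m(t+t_k))/sin²((t+t_k)/2) satisfies |Ψ(π/m, t_k)| ≥ 2|sin(m t_k)| and |Ψ(π − π/m, t_k)| ≥ 2|sin(m t_k)|. -/

import Mathlib

open Real

/-- `Ψ(t,s) = sin(m(t-s))/sin²((t-s)/2) − sin(m(t+s))/sin²((t+s)/2)`. -/
noncomputable def vpPsi (m : ℕ) (t s : ℝ) : ℝ :=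
  Real.sin (m * (t - s)) / Real.sin ((t - s) / 2) ^ 2
    - Real.sin (m * (t + s)) / Real.sin ((t + s) / 2) ^ 2

/-- The hypothesis on `A = 0` guards against the junk value `c / 0 = 0`. -/
lemma two_mul_abs_le_abs_div_sq_add_div_sq {c A B : ℝ} (hA : A ^ 2 ≤ 1) (hB : B ^ 2 ≤ 1)
    (hB0 : B ≠ 0) (hAc : A = 0 → c = 0) :
    2 * |c| ≤ |c / A ^ 2 + c / B ^ 2| := by
  rcases eq_or_ne A 0 with hA0 | hA0
  · simp [hAc hA0]
  have hA' : 1 ≤ 1 / A ^ 2 := by rw [le_div_iff₀ (by positivity)]; linarith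
  have hB' : 1 ≤ 1 / B ^ 2 := by rw [le_div_iff₀ (by positivity)]; linarith
  calc 2 * |c| ≤ |c| * (1 / A ^ 2 + 1 / B ^ 2) := by nlinarith [abs_nonneg c]
    _ = |c / A ^ 2 + c / B ^ 2| := by
      rw [show c / A ^ 2 + c / B ^ 2 = c * (1 / A ^ 2 + 1 / B ^ 2) by ring, abs_mul,
        abs_of_pos (show 0 < 1 / A ^ 2 + 1 / B ^ 2 by positivity)]

/-- At a zero `t` of `sin (m t)` the two numerators of `Ψ(t, s)` are `∓ cos (m t) sin (m s)`,
so both terms of `Ψ` have the same sign and each has modulus at least `|sin (m s)|`. -/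
lemma two_mul_abs_sin_le_abs_vpPsi {m : ℕ} {t s : ℝ} (ht0 : 0 ≤ t) (htπ : t ≤ π)
    (hs0 : 0 < s) (hsπ : s < π) (hmt : Real.sin (m * t) = 0) :
    2 * |Real.sin (m * s)| ≤ |vpPsi m t s| := by
  have hcos : |Real.cos (m * t)| = 1 := by
    rw [Real.abs_cos_eq_sqrt_one_sub_sin_sq, hmt]; simp
  set c := Real.sin (m * (t - s)) with hc
  have habs : |c| = |Real.sin (m * s)| := by
    rw [hc, mul_sub, Real.sin_sub, hmt, zero_mul, zero_sub, abs_neg, abs_mul, hcos, one_mul]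
  have hadd : Real.sin (m * (t + s)) = -c := by
    rw [hc, mul_add, mul_sub, Real.sin_add, Real.sin_sub, hmt]; ring
  have hB0 : Real.sin ((t + s) / 2) ≠ 0 :=
    (Real.sin_pos_of_pos_of_lt_pi (by linarith) (by linarith)).ne'
  have hAc : Real.sin ((t - s) / 2) = 0 → c = 0 := by
    intro hA
    have : (t - s) / 2 = 0 :=
      (Real.sin_eq_zero_iff_of_lt_of_lt (by linarith) (by linarith)).1 hA
    rw [hc, show t - s = 0 by linarith, mul_zero, Real.sin_zero]
  calc 2 * |Real.sin (m * s)| = 2 * |c| := by rw [habs]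
    _ ≤ |c / Real.sin ((t - s) / 2) ^ 2 + c / Real.sin ((t + s) / 2) ^ 2| :=
      two_mul_abs_le_abs_div_sq_add_div_sq (Real.sin_sq_le_one _) (Real.sin_sq_le_one _) hB0 hAc
    _ = |vpPsi m t s| := by rw [vpPsi, hadd, ← hc]; ring_nf

theorem stmt_16_general (m n : ℕ) (hm : 0 < m)
    (k : ℕ) (hk1 : 1 ≤ k) (hkn : k ≤ n) :
    2 * |Real.sin (m * ((k : ℝ) * π / (n + 1)))| ≤
      |vpPsi m (π / m) ((k : ℝ) * π / (n + 1))| ∧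
    2 * |Real.sin (m * ((k : ℝ) * π / (n + 1)))| ≤
      |vpPsi m (π - π / m) ((k : ℝ) * π / (n + 1))| := by
  have hm' : (1 : ℝ) ≤ m := by exact_mod_cast hm
  have hkn' : (k : ℝ) < n + 1 := by exact_mod_cast Nat.lt_succ_of_le hkn
  have hs0 : 0 < (k : ℝ) * π / (n + 1) := by positivity
  have hsπ : (k : ℝ) * π / (n + 1) < π := by
    rw [div_lt_iff₀ (by positivity)]; nlinarith [Real.pi_pos]
  have ht0 : 0 < π / m := by positivity
  have htπ : π / m ≤ π := div_le_self Real.pi_pos.le hm'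
  have hmt : (m : ℝ) * (π / m) = π := mul_div_cancel₀ π (by positivity)
  refine ⟨two_mul_abs_sin_le_abs_vpPsi ht0.le htπ hs0 hsπ ?_,
    two_mul_abs_sin_le_abs_vpPsi (by linarith) (by linarith) hs0 hsπ ?_⟩
  · rw [hmt, Real.sin_pi]
  · rw [mul_sub, hmt, Real.sin_sub_pi, Real.sin_nat_mul_pi, neg_zero]

/-- at `t = π/m` and `t = π - π/m` one has `|Ψ(t, t_k)| ≥ 2|sin(m t_k)|`,
where `t_k = kπ/(n+1)`. -/
theorem stmt_16 (m n : ℕ) (hm : 0 < m) (hmn : m < n)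
    (k : ℕ) (hk1 : 1 ≤ k) (hkn : k ≤ n) :
    2 * |Real.sin (m * ((k : ℝ) * π / (n + 1)))| ≤
      |vpPsi m (π / m) ((k : ℝ) * π / (n + 1))| ∧
    2 * |Real.sin (m * ((k : ℝ) * π / (n + 1)))| ≤
      |vpPsi m (π - π / m) ((k : ℝ) * π / (n + 1))| :=
  stmt_16_general m n hm k hk1 hkn
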